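/- Consider the nine polynomials in ℂ[x, y, z, t, v]: zt − yv, y²z − t², yz² − tv, x⁹y + y⁴ + y²v + 2v², x⁹z − 2x⁸t − yt² + yzv, z³ − v², x⁹t + y³t + 2z²v + ytv, x⁸y² + y³t + z²v, and 2x⁸yz − x⁹v + y³v − yv². Their common zero locus in ℂ⁵ ∖ {0} is the union of exactly 22 orbits of the ℂ*-action λ·(x, y, z, t, v) = (λx, λ³y, λ⁴z, λ⁵t, λ⁶v); equivalently, it determines exactly 22 points of the weighted projective space ℙ(1,3,4,5,6). -/

import Mathlib

/-!
No point of the locus has `x = 0`, so every orbit has a representative with `x = 1`, unique because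
`x` has weight `1`. The equations `zt = yv`, `y²z = t²`, `z³ = v²` put every point on the divisor
`D : (a, b, c) ↦ (a, c, b², bc, b³)`, and on `D ∩ {x = 1}` the nine equations reduce to three
equations in `(b, c)`. A lexicographic Gröbner basis of these three is `{P(b), c - q(b)}`, where
`P = nodePoly` is separable of degree `22` and `q = nodeY`; since `b` is determined by `(b², b³)`,
the orbits correspond to the `22` roots of `P`.
-/

/-- The nine polynomials (as functions of `p ∈ ℂ⁵`, in coordinates
`x = p 0, y = p 1, z = p 2, t = p 3, v = p 4`):
`zt − yv`, `y²z − t²`, `yz² − tv`, `x⁹y + y⁴ + y²v + 2v²`,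
`x⁹z − 2x⁸t − yt² + yzv`, `z³ − v²`, `x⁹t + y³t + 2z²v + ytv`,
`x⁸y² + y³t + z²v`, `2x⁸yz − x⁹v + y³v − yv²`. -/
def singEqns : Fin 9 → (Fin 5 → ℂ) → ℂ :=
  ![fun p => p 2 * p 3 - p 1 * p 4,
    fun p => p 1 ^ 2 * p 2 - p 3 ^ 2,
    fun p => p 1 * p 2 ^ 2 - p 3 * p 4,
    fun p => p 0 ^ 9 * p 1 + p 1 ^ 4 + p 1 ^ 2 * p 4 + 2 * p 4 ^ 2,
    fun p => p 0 ^ 9 * p 2 - 2 * p 0 ^ 8 * p 3 - p 1 * p 3 ^ 2 + p 1 * p 2 * p 4,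
    fun p => p 2 ^ 3 - p 4 ^ 2,
    fun p => p 0 ^ 9 * p 3 + p 1 ^ 3 * p 3 + 2 * p 2 ^ 2 * p 4 + p 1 * p 3 * p 4,
    fun p => p 0 ^ 8 * p 1 ^ 2 + p 1 ^ 3 * p 3 + p 2 ^ 2 * p 4,
    fun p => 2 * p 0 ^ 8 * p 1 * p 2 - p 0 ^ 9 * p 4 + p 1 ^ 3 * p 4 - p 1 * p 4 ^ 2]

/-- The common zero locus of the nine polynomials in `ℂ⁵ ∖ {0}`. -/
def singLocus : Set (Fin 5 → ℂ) :=
  { p | p ≠ 0 ∧ ∀ i : Fin 9, singEqns i p = 0 }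

/-- The `ℂ*`-action `λ·(x, y, z, t, v) = (λx, λ³y, λ⁴z, λ⁵t, λ⁶v)` with
weights `(1, 3, 4, 5, 6)`. -/
def wAct (l : ℂ) (p : Fin 5 → ℂ) : Fin 5 → ℂ :=
  fun i => l ^ (![1, 3, 4, 5, 6] i : ℕ) * p i

open Polynomial

theorem isCoprime_of_mul_add_mul_eq_isUnit {R : Type*} [CommSemiring R] {a b x y u : R}
    (hu : IsUnit u) (h : a * x + b * y = u) : IsCoprime x y := by
  obtain ⟨v, hv⟩ := hu.exists_left_inv
  exact ⟨v * a, v * b, by rw [mul_assoc, mul_assoc, ← mul_add, h, hv]⟩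

theorem card_quot_eq_of_transversal {α ι : Type*} {r : α → α → Prop} (hr : Equivalence r)
    (f : ι → α) (hsurj : ∀ a, ∃ i, r (f i) a) (hinj : ∀ i j, r (f i) (f j) → i = j) :
    Nat.card (Quot r) = Nat.card ι := by
  refine (Nat.card_eq_of_bijective (Quot.mk r ∘ f) ⟨fun i j h => hinj i j ?_, fun q => ?_⟩).symm
  · exact hr.eqvGen_iff.mp (Quot.eq.mp h)
  · obtain ⟨a, rfl⟩ := Quot.exists_rep q
    obtain ⟨i, hi⟩ := hsurj a
    exact ⟨i, Quot.sound hi⟩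

theorem wAct_one (p : Fin 5 → ℂ) : wAct 1 p = p := by
  funext i
  simp [wAct]

theorem wAct_wAct (a b : ℂ) (p : Fin 5 → ℂ) : wAct a (wAct b p) = wAct (a * b) p := by
  funext i
  simp only [wAct]
  ring

theorem equivalence_wAct : Equivalence fun p q : Fin 5 → ℂ => ∃ l : ℂ, l ≠ 0 ∧ q = wAct l p where
  refl p := ⟨1, one_ne_zero, (wAct_one p).symm⟩
  symm := by
    rintro p q ⟨l, hl, rfl⟩
    exact ⟨l⁻¹, inv_ne_zero hl, by rw [wAct_wAct, inv_mul_cancel₀ hl, wAct_one]⟩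
  trans := by
    rintro p q s ⟨l, hl, rfl⟩ ⟨m, hm, rfl⟩
    exact ⟨m * l, mul_ne_zero hm hl, wAct_wAct m l p⟩

def singEqnsDegree : Fin 9 → ℕ := ![9, 10, 11, 12, 13, 12, 14, 14, 15]

theorem singEqns_wAct (i : Fin 9) (l : ℂ) (p : Fin 5 → ℂ) :
    singEqns i (wAct l p) = l ^ singEqnsDegree i * singEqns i p := by
  fin_cases i <;> simp [singEqns, singEqnsDegree, wAct] <;> ring

theorem wAct_mem_singLocus {p : Fin 5 → ℂ} {l : ℂ} (hl : l ≠ 0) (hp : p ∈ singLocus) :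
    wAct l p ∈ singLocus := by
  refine ⟨fun h => hp.1 ?_, fun i => by rw [singEqns_wAct, hp.2 i, mul_zero]⟩
  rw [← wAct_one p, ← inv_mul_cancel₀ hl, ← wAct_wAct, h]
  funext i
  simp [wAct]

theorem wAct_mem_singLocus_iff {p : Fin 5 → ℂ} {l : ℂ} (hl : l ≠ 0) :
    wAct l p ∈ singLocus ↔ p ∈ singLocus := by
  refine ⟨fun h => ?_, wAct_mem_singLocus hl⟩
  simpa [wAct_wAct, inv_mul_cancel₀ hl, wAct_one] using wAct_mem_singLocus (inv_ne_zero hl) h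

def divisorD (a b c : ℂ) : Fin 5 → ℂ := ![a, c, b ^ 2, b * c, b ^ 3]

def divisorEqns (a b c : ℂ) : Fin 3 → ℂ :=
  ![a ^ 9 * c + c ^ 4 + b ^ 3 * c ^ 2 + 2 * b ^ 6,
    a ^ 9 * b - 2 * a ^ 8 * c - b * c ^ 3 + b ^ 4 * c,
    a ^ 8 * c ^ 2 + b * c ^ 4 + b ^ 7]

theorem wAct_divisorD (l a b c : ℂ) :
    wAct l (divisorD a b c) = divisorD (l * a) (l ^ 2 * b) (l ^ 3 * c) := by
  funext i
  fin_cases i <;> simp [wAct, divisorD] <;> ring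

theorem divisorD_eq_wAct {a : ℂ} (ha : a ≠ 0) (b c : ℂ) :
    divisorD a b c = wAct a (divisorD 1 (a⁻¹ ^ 2 * b) (a⁻¹ ^ 3 * c)) := by
  rw [wAct_divisorD]
  congr 1 <;> field_simp

theorem singEqns_divisorD (a b c : ℂ) (i : Fin 9) :
    singEqns i (divisorD a b c) =
      ![0, 0, 0, divisorEqns a b c 0, b * divisorEqns a b c 1, 0, b * divisorEqns a b c 0,
        divisorEqns a b c 2, -b ^ 2 * divisorEqns a b c 1] i := by
  fin_cases i <;> simp [singEqns, divisorD, divisorEqns] <;> ring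

theorem divisorD_mem_singLocus_iff (a b c : ℂ) :
    divisorD a b c ∈ singLocus ↔ divisorD a b c ≠ 0 ∧
      divisorEqns a b c 0 = 0 ∧ b * divisorEqns a b c 1 = 0 ∧ divisorEqns a b c 2 = 0 := by
  simp only [singLocus, ne_eq, Fin.forall_fin_succ, Fin.isValue, Fin.succ_zero_eq_one,
    Fin.succ_one_eq_two, Fin.reduceSucc, IsEmpty.forall_iff, and_true, Set.mem_ofPred_eq,
    singEqns_divisorD, Nat.succ_eq_add_one, Nat.reduceAdd, neg_mul, Matrix.cons_val_zero,
    Matrix.cons_val_one, Matrix.cons_val, mul_eq_zero, neg_eq_zero, OfNat.ofNat_ne_zero,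
    not_false_eq_true, pow_eq_zero_iff, true_and, and_congr_right_iff]
  tauto

theorem exists_eq_divisorD {p : Fin 5 → ℂ} (hp : p ∈ singLocus) :
    ∃ b, p = divisorD (p 0) b (p 1) := by
  have e0 : p 2 * p 3 = p 1 * p 4 := sub_eq_zero.mp (hp.2 0)
  have e1 : p 1 ^ 2 * p 2 = p 3 ^ 2 := sub_eq_zero.mp (hp.2 1)
  have e5 : p 2 ^ 3 = p 4 ^ 2 := sub_eq_zero.mp (hp.2 5)
  suffices ∃ b, p 2 = b ^ 2 ∧ p 3 = b * p 1 ∧ p 4 = b ^ 3 by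
    obtain ⟨b, h2, h3, h4⟩ := this
    exact ⟨b, by funext i; fin_cases i <;> simp [divisorD, h2, h3, h4]⟩
  by_cases hz : p 2 = 0
  · refine ⟨0, by simp [hz], ?_, ?_⟩
    · have : p 3 ^ 2 = 0 := by rw [← e1, hz, mul_zero]
      simpa using this
    · have : p 4 ^ 2 = 0 := by rw [← e5, hz, zero_pow three_ne_zero]
      simpa using this
  · have hv : p 4 ≠ 0 := fun hv => hz (pow_eq_zero_iff three_ne_zero |>.mp (by simpa [hv] using e5))
    refine ⟨p 4 / p 2, ?_, ?_, ?_⟩ <;> field_simp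
    · linear_combination e5
    · linear_combination e0
    · linear_combination e5

theorem divisorD_zero_notMem_singLocus (b c : ℂ) : divisorD 0 b c ∉ singLocus := by
  rintro ⟨hne, h⟩
  have e3 : c ^ 4 + b ^ 3 * c ^ 2 + 2 * b ^ 6 = 0 := by
    simpa [singEqns_divisorD, divisorEqns] using h 3
  have e7 : b * (c ^ 4 + b ^ 6) = 0 := by
    linear_combination (by simpa [singEqns_divisorD, divisorEqns] using h 7 : b * c ^ 4 + b ^ 7 = 0)
  have hb : b = 0 := by
    by_contra hb
    have h46 : c ^ 4 + b ^ 6 = 0 := (mul_eq_zero.mp e7).resolve_left hb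
    have h23 : c ^ 2 + b ^ 3 = 0 := by
      have : b ^ 3 * (c ^ 2 + b ^ 3) = 0 := by linear_combination e3 - h46
      exact (mul_eq_zero.mp this).resolve_left (pow_ne_zero 3 hb)
    have : b ^ 6 = 0 := by linear_combination (h46 - (c ^ 2 - b ^ 3) * h23) / 2
    exact hb (pow_eq_zero_iff (by norm_num) |>.mp this)
  have hc : c ^ 4 = 0 := by simpa [hb] using e3
  exact hne (by simp [divisorD, hb, pow_eq_zero_iff (n := 4) (by norm_num) |>.mp hc])

theorem divisorD_one_mem_singLocus_iff (b c : ℂ) :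
    divisorD 1 b c ∈ singLocus ↔
      divisorEqns 1 b c 0 = 0 ∧ divisorEqns 1 b c 1 = 0 ∧ divisorEqns 1 b c 2 = 0 := by
  have hne : divisorD 1 b c ≠ 0 := fun h => one_ne_zero (congrFun h 0)
  rw [divisorD_mem_singLocus_iff]
  refine ⟨fun ⟨_, h0, h1, h2⟩ => ⟨h0, ?_, h2⟩, fun ⟨h0, h1, h2⟩ => ⟨hne, h0, by rw [h1, mul_zero], h2⟩⟩
  rcases mul_eq_zero.mp h1 with hb | h1
  · have : c ^ 2 = 0 := by simpa [divisorEqns, hb] using h2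
    simp [divisorEqns, hb, pow_eq_zero_iff two_ne_zero |>.mp this]
  · exact h1

theorem exists_eq_wAct_divisorD_one {p : Fin 5 → ℂ} (hp : p ∈ singLocus) :
    ∃ l ≠ 0, ∃ b c, divisorD 1 b c ∈ singLocus ∧ p = wAct l (divisorD 1 b c) := by
  obtain ⟨b, hb⟩ := exists_eq_divisorD hp
  generalize p 0 = a at hb
  generalize p 1 = c at hb
  subst hb
  have ha : a ≠ 0 := by
    rintro rfl
    exact divisorD_zero_notMem_singLocus b c hp
  refine ⟨a, ha, _, _, ?_, divisorD_eq_wAct ha b c⟩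
  rwa [divisorD_eq_wAct ha, wAct_mem_singLocus_iff ha] at hp

theorem eq_of_sq_eq_sq_of_pow_three_eq_pow_three {M : Type*} [CommMonoidWithZero M]
    [IsCancelMulZero M] {a b : M} (h2 : a ^ 2 = b ^ 2) (h3 : a ^ 3 = b ^ 3) : a = b := by
  rcases eq_or_ne b 0 with rfl | hb
  · simpa using h2
  · refine mul_right_cancel₀ (pow_ne_zero 2 hb) ?_
    rw [← pow_succ', ← h2, ← pow_succ', h3]

theorem eq_of_divisorD_one_eq_wAct {l b b' c c' : ℂ}
    (h : divisorD 1 b' c' = wAct l (divisorD 1 b c)) : b = b' := by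
  rw [wAct_divisorD] at h
  obtain rfl : l = 1 := by simpa [divisorD] using (congrFun h 0).symm
  simp only [one_pow, one_mul] at h
  exact eq_of_sq_eq_sq_of_pow_three_eq_pow_three (congrFun h 2).symm (congrFun h 4).symm

noncomputable def nodePoly : ℂ[X] :=
  4 * X ^ 22 - 12 * X ^ 18 + 17 * X ^ 14 - 4 * X ^ 13 - 12 * X ^ 10 + 6 * X ^ 9 + 4 * X ^ 6
    - 2 * X ^ 5 + X ^ 4 + X

noncomputable def nodeY (b : ℂ) : ℂ :=
  (2 * b - 2 * b ^ 2 + 2 * b ^ 3 - b ^ 4 - b ^ 5 + 8 * b ^ 6 - 10 * b ^ 7 + 10 * b ^ 8 - 4 * b ^ 9 - 11 * b ^ 10 + 16 * b ^ 11 - 16 * b ^ 12 + 12 * b ^ 13 + 5 * b ^ 14 - 10 * b ^ 15 + 10 * b ^ 16 - 10 * b ^ 17 - 2 * b ^ 18 + 4 * b ^ 19 - 4 * b ^ 20 + 4 * b ^ 21)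

theorem isRoot_nodePoly_iff (b : ℂ) :
    nodePoly.IsRoot b ↔ 4 * b ^ 22 - 12 * b ^ 18 + 17 * b ^ 14 - 4 * b ^ 13 - 12 * b ^ 10
      + 6 * b ^ 9 + 4 * b ^ 6 - 2 * b ^ 5 + b ^ 4 + b = 0 := by
  simp [nodePoly]

theorem natDegree_nodePoly : nodePoly.natDegree = 22 := by
  unfold nodePoly
  compute_degree!

theorem nodePoly_ne_zero : nodePoly ≠ 0 :=
  ne_zero_of_natDegree_gt (n := 0) (by rw [natDegree_nodePoly]; norm_num)

theorem derivative_nodePoly : derivative nodePoly =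
    88 * X ^ 21 - 216 * X ^ 17 + 238 * X ^ 13 - 52 * X ^ 12 - 120 * X ^ 9 + 54 * X ^ 8
      + 24 * X ^ 5 - 10 * X ^ 4 + 4 * X ^ 3 + 1 := by
  unfold nodePoly
  simp only [derivative_add, derivative_sub, derivative_mul, derivative_X_pow, derivative_X,
    derivative_ofNat, C_eq_natCast]
  push_cast
  ring

theorem separable_nodePoly : nodePoly.Separable := by
  have hu : IsUnit (316102021805690997211894 : ℂ[X]) := by
    rw [← map_ofNat C]
    exact isUnit_C.mpr (by norm_num)
  -- Bézout certificate from the extended Euclidean algorithm on `nodePoly` and its derivative.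
  refine isCoprime_of_mul_add_mul_eq_isUnit hu
    (a := (-2342013132218815314503419 + 2947320365591727407483256 * X - 5292653088959188258457159 * X ^ 2 - 921435295251788233040313 * X ^ 3 + 20539310403833742352621236 * X ^ 4 - 93177899018363473942362888 * X ^ 5 + 116309890908850837970410644 * X ^ 6 - 162914562552417909924344572 * X ^ 7 + 94191118586314512335011854 * X ^ 8 + 218889669750223435372845240 * X ^ 9 - 276249858665732883577045874 * X ^ 10 + 363286662407481821311643330 * X ^ 11 - 392191629982472861653146848 * X ^ 12 - 171052754487408451305226274 * X ^ 13 + 216833535493614391481870296 * X ^ 14 - 271363148186625628821462130 * X ^ 15 + 413188766062137026895208986 * X ^ 16 + 81567872505054809903576844 * X ^ 17 - 103946513316740967729897832 * X ^ 18 + 130630388186334871176986468 * X ^ 19 - 193922854039712600234381004 * X ^ 20))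
    (b := (316102021805690997211894 + 2342013132218815314503419 * X - 2947320365591727407483256 * X ^ 2 + 4028245001736424269609583 * X ^ 3 - 2943583883347747738351004 * X ^ 4 - 547692772644621547229572 * X ^ 5 + 11938746531266839572447287 * X ^ 6 - 14970568928927644455119683 * X ^ 7 + 20710536951836856624807326 * X ^ 8 - 13319145960264244227642846 * X ^ 9 - 16889436911251330434439734 * X ^ 10 + 21338134218360003406136088 * X ^ 11 - 28073852333300802919591234 * X ^ 12 + 29892455724633010909456832 * X ^ 13 + 9797469150379429023879959 * X ^ 14 - 12433256075744645093718844 * X ^ 15 + 15573458508970624562388439 * X ^ 16 - 23589312193891664864684235 * X ^ 17 - 3707630568411582268344402 * X ^ 18 + 4724841514397316714995356 * X ^ 19 - 5937744917560675962590294 * X ^ 20 + 8814675183623300010653682 * X ^ 21)) ?_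
  rw [derivative_nodePoly, nodePoly]
  ring

theorem card_rootSet_nodePoly : Nat.card (nodePoly.rootSet ℂ) = 22 := by
  rw [Nat.card_eq_fintype_card, card_rootSet_eq_natDegree separable_nodePoly (IsAlgClosed.splits _),
    natDegree_nodePoly]

theorem mem_rootSet_nodePoly {b : ℂ} : b ∈ nodePoly.rootSet ℂ ↔ nodePoly.IsRoot b := by
  rw [mem_rootSet, coe_aeval_eq_eval]
  exact and_iff_right nodePoly_ne_zero

-- Certificates from the Gröbner basis: `P(b)` and `c - q(b)` lie in the ideal of the three
-- equations, and each equation at `c = q(b)` is a multiple of `P(b)`.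
theorem divisorEqns_one_eq_zero_iff (b c : ℂ) :
    (divisorEqns 1 b c 0 = 0 ∧ divisorEqns 1 b c 1 = 0 ∧ divisorEqns 1 b c 2 = 0) ↔
      nodePoly.IsRoot b ∧ c = nodeY b := by
  simp only [divisorEqns, isRoot_nodePoly_iff, Fin.isValue, Matrix.cons_val, one_pow, one_mul]
  constructor
  · rintro ⟨hG1, hG2, hG3⟩
    refine ⟨?_, ?_⟩
    · linear_combination ((2 + b * c ^ 2 + 4 * b * c ^ 3 + b ^ 2 * c - 4 * b ^ 2 * c ^ 3 + b ^ 3 - 4 * b ^ 3 * c + 4 * b ^ 3 * c ^ 3 - 5 * b ^ 4 + 4 * b ^ 4 * c - 8 * b ^ 4 * c ^ 3 - 4 * b ^ 5 * c - 2 * b ^ 5 * c ^ 2 - 16 * b ^ 5 * c ^ 3 + 9 * b ^ 6 * c + 16 * b ^ 6 * c ^ 3 + 8 * b ^ 7 * c + 8 * b ^ 7 * c ^ 2 - 16 * b ^ 7 * c ^ 3 + 4 * b ^ 8 - 20 * b ^ 8 * c - 8 * b ^ 8 * c ^ 2 + 32 * b ^ 8 * c ^ 3 - 4 * b ^ 9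 + 20 * b ^ 9 * c + 7 * b ^ 9 * c ^ 2 + 12 * b ^ 9 * c ^ 3 + 4 * b ^ 10 - 26 * b ^ 10 * c - 12 * b ^ 10 * c ^ 2 - 12 * b ^ 10 * c ^ 3 - 4 * b ^ 11 + 28 * b ^ 11 * c - 32 * b ^ 11 * c ^ 2 + 12 * b ^ 11 * c ^ 3 + 7 * b ^ 12 + 28 * b ^ 12 * c + 32 * b ^ 12 * c ^ 2 - 24 * b ^ 12 * c ^ 3 + 8 * b ^ 13 - 28 * b ^ 13 * c - 38 * b ^ 13 * c ^ 2 - 16 * b ^ 14 + 28 * b ^ 14 * c + 52 * b ^ 14 * c ^ 2 + 16 * b ^ 15 - 56 * b ^ 15 * c + 28 * b ^ 15 * c ^ 2 - 22 * b ^ 16 - 12 * b ^ 16 * c - 28 * b ^ 16 * c ^ 2 + 20 * b ^ 17 + 12 * b ^ 17 * c + 28 * b ^ 17 * c ^ 2 + 16 * b ^ 18 - 12 * b ^ 18 * c - 56 * b ^ 18 * c ^ 2 - 16 * b ^ 19 + 24 * b ^ 19 * c - 12 * b ^ 19 * c ^ 2 + 16 * b ^ 20 + 12 * b ^ 20 *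 c ^ 2 - 32 * b ^ 21 - 12 * b ^ 21 * c ^ 2 - 12 * b ^ 22 + 24 * b ^ 22 * c ^ 2 + 12 * b ^ 23 - 12 * b ^ 24 + 24 * b ^ 25)) * hG1 + ((1 + 2 * c ^ 3 + b * c ^ 2 + b * c ^ 5 + 4 * b * c ^ 6 + b ^ 2 * c + b ^ 2 * c ^ 4 - 4 * b ^ 2 * c ^ 6 + b ^ 3 + b ^ 3 * c ^ 3 - 4 * b ^ 3 * c ^ 4 + 4 * b ^ 3 * c ^ 6 - 2 * b ^ 4 - 5 * b ^ 4 * c ^ 3 + 4 * b ^ 4 * c ^ 4 - 8 * b ^ 4 * c ^ 6 - 2 * b ^ 5 * c ^ 2 - 4 * b ^ 5 * c ^ 4 - 2 * b ^ 5 * c ^ 5 - 16 * b ^ 5 * c ^ 6 - b ^ 6 * c + 9 * b ^ 6 * c ^ 4 + 16 * b ^ 6 * c ^ 6 + 4 * b ^ 7 * c + 8 * b ^ 7 * c ^ 2 + 8 * b ^ 7 * c ^ 4 + 8 * b ^ 7 * c ^ 5 - 16 * b ^ 7 * c ^ 6 + 4 * b ^ 8 + 4 * b ^ 8 * c - 8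 * b ^ 8 * c ^ 2 + 5 * b ^ 8 * c ^ 3 - 16 * b ^ 8 * c ^ 4 - 8 * b ^ 8 * c ^ 5 + 32 * b ^ 8 * c ^ 6 - 4 * b ^ 9 - 4 * b ^ 9 * c + 8 * b ^ 9 * c ^ 2 + 16 * b ^ 9 * c ^ 4 + 7 * b ^ 9 * c ^ 5 + 12 * b ^ 9 * c ^ 6 + 4 * b ^ 10 + 4 * b ^ 10 * c - 16 * b ^ 10 * c ^ 2 - 22 * b ^ 10 * c ^ 4 - 12 * b ^ 10 * c ^ 5 - 12 * b ^ 10 * c ^ 6 - 4 * b ^ 11 - 14 * b ^ 11 * c - 28 * b ^ 11 * c ^ 2 + 20 * b ^ 11 * c ^ 4 - 32 * b ^ 11 * c ^ 5 + 12 * b ^ 11 * c ^ 6 + 7 * b ^ 12 - 8 * b ^ 12 * c + 28 * b ^ 12 * c ^ 2 - 2 * b ^ 12 * c ^ 3 + 16 * b ^ 12 * c ^ 4 + 32 * b ^ 12 * c ^ 5 - 24 * b ^ 12 * c ^ 6 + 8 * b ^ 13 + 24 * b ^ 13 * c - 28 * b ^ 13 * c ^ 2 - 16 * b ^ 13 *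 c ^ 4 - 38 * b ^ 13 * c ^ 5 - 16 * b ^ 14 - 24 * b ^ 14 * c + 56 * b ^ 14 * c ^ 2 + 16 * b ^ 14 * c ^ 4 + 52 * b ^ 14 * c ^ 5 + 16 * b ^ 15 + 31 * b ^ 15 * c + 12 * b ^ 15 * c ^ 2 - 32 * b ^ 15 * c ^ 4 + 28 * b ^ 15 * c ^ 5 - 22 * b ^ 16 - 32 * b ^ 16 * c - 12 * b ^ 16 * c ^ 2 - 12 * b ^ 16 * c ^ 4 - 28 * b ^ 16 * c ^ 5 + 20 * b ^ 17 - 48 * b ^ 17 * c + 12 * b ^ 17 * c ^ 2 + 12 * b ^ 17 * c ^ 4 + 28 * b ^ 17 * c ^ 5 + 16 * b ^ 18 + 48 * b ^ 18 * c - 24 * b ^ 18 * c ^ 2 - 12 * b ^ 18 * c ^ 4 - 56 * b ^ 18 * c ^ 5 - 16 * b ^ 19 - 54 * b ^ 19 * c + 24 * b ^ 19 * c ^ 4 - 12 * b ^ 19 * c ^ 5 + 16 * b ^ 20 + 84 * b ^ 20 * c + 12 * b ^ 20 * c ^ 5 - 32 * b ^ 21 + 40 * b ^ 21 * c - 12 *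 b ^ 21 * c ^ 5 - 12 * b ^ 22 - 40 * b ^ 22 * c + 24 * b ^ 22 * c ^ 5 + 12 * b ^ 23 + 40 * b ^ 23 * c - 12 * b ^ 24 - 80 * b ^ 24 * c + 24 * b ^ 25 - 12 * b ^ 25 * c + 12 * b ^ 26 * c - 12 * b ^ 27 * c + 24 * b ^ 28 * c)) * hG2 + ((2 * c ^ 2 - 4 * b * c ^ 2 + b * c ^ 4 + 4 * b * c ^ 5 + 4 * b ^ 2 * c ^ 2 + b ^ 2 * c ^ 3 - 4 * b ^ 2 * c ^ 5 + 2 * b ^ 3 - 3 * b ^ 3 * c ^ 2 - 4 * b ^ 3 * c ^ 3 + 4 * b ^ 3 * c ^ 5 - 4 * b ^ 4 + 2 * b ^ 4 * c ^ 2 - 8 * b ^ 4 * c ^ 5 + 4 * b ^ 5 - b ^ 5 * c + 16 * b ^ 5 * c ^ 2 - 2 * b ^ 5 * c ^ 4 - 16 * b ^ 5 * c ^ 5 - 11 * b ^ 6 + 4 * b ^ 6 * c - 16 * b ^ 6 * c ^ 2 + 5 * b ^ 6 * c ^ 3 + 16 * b ^ 6 * c ^ 5 + b ^ 7 - 4 *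 b ^ 7 * c + 16 * b ^ 7 * c ^ 2 + 16 * b ^ 7 * c ^ 3 + 8 * b ^ 7 * c ^ 4 - 16 * b ^ 7 * c ^ 5 + 24 * b ^ 8 + 4 * b ^ 8 * c - 25 * b ^ 8 * c ^ 2 - 8 * b ^ 8 * c ^ 4 + 32 * b ^ 8 * c ^ 5 - 24 * b ^ 9 - 8 * b ^ 9 * c - 12 * b ^ 9 * c ^ 2 + 7 * b ^ 9 * c ^ 4 + 12 * b ^ 9 * c ^ 5 + 30 * b ^ 10 - 12 * b ^ 10 * c + 4 * b ^ 10 * c ^ 2 - 6 * b ^ 10 * c ^ 3 - 12 * b ^ 10 * c ^ 4 - 12 * b ^ 10 * c ^ 5 - 46 * b ^ 11 + 24 * b ^ 11 * c - 4 * b ^ 11 * c ^ 2 - 12 * b ^ 11 * c ^ 3 - 32 * b ^ 11 * c ^ 4 + 12 * b ^ 11 * c ^ 5 - 32 * b ^ 12 - 24 * b ^ 12 * c + 15 * b ^ 12 * c ^ 2 + 4 * b ^ 12 * c ^ 3 + 32 * b ^ 12 * c ^ 4 - 24 * b ^ 12 * c ^ 5 + 48 * b ^ 13 + 36 * b ^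 13 * c + 12 * b ^ 13 * c ^ 2 - 4 * b ^ 13 * c ^ 3 - 38 * b ^ 13 * c ^ 4 - 48 * b ^ 14 - 24 * b ^ 14 * c + 32 * b ^ 14 * c ^ 2 + 4 * b ^ 14 * c ^ 3 + 52 * b ^ 14 * c ^ 4 + 80 * b ^ 15 - 44 * b ^ 15 * c - 32 * b ^ 15 * c ^ 2 - 8 * b ^ 15 * c ^ 3 + 28 * b ^ 15 * c ^ 4 - 28 * b ^ 16 + 44 * b ^ 16 * c + 38 * b ^ 16 * c ^ 2 - 12 * b ^ 16 * c ^ 3 - 28 * b ^ 16 * c ^ 4 - 44 * b ^ 17 - 44 * b ^ 17 * c - 52 * b ^ 17 * c ^ 2 + 12 * b ^ 17 * c ^ 3 + 28 * b ^ 17 * c ^ 4 + 44 * b ^ 18 + 88 * b ^ 18 * c - 28 * b ^ 18 * c ^ 2 - 12 * b ^ 18 * c ^ 3 - 56 * b ^ 18 * c ^ 4 - 56 * b ^ 19 + 24 * b ^ 19 * c + 28 * b ^ 19 * c ^ 2 + 24 * b ^ 19 * c ^ 3 - 12 * b ^ 19 * c ^ 4 + 64 * b ^ 20 - 24 * b ^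 20 * c - 28 * b ^ 20 * c ^ 2 + 12 * b ^ 20 * c ^ 4 + 24 * b ^ 21 + 24 * b ^ 21 * c + 56 * b ^ 21 * c ^ 2 - 12 * b ^ 21 * c ^ 4 - 24 * b ^ 22 - 48 * b ^ 22 * c + 12 * b ^ 22 * c ^ 2 + 24 * b ^ 22 * c ^ 4 + 24 * b ^ 23 - 12 * b ^ 23 * c ^ 2 - 48 * b ^ 24 + 12 * b ^ 24 * c ^ 2 - 24 * b ^ 25 * c ^ 2)) * hG3
    · unfold nodeY
      linear_combination ((-3 + 2 * c + 4 * b - 2 * b * c - b * c ^ 2 - 4 * b * c ^ 3 - 4 * b ^ 2 + b ^ 2 * c + 2 * b ^ 2 * c ^ 2 + 12 * b ^ 2 * c ^ 3 + 3 * b ^ 3 + 2 * b ^ 3 * c - 2 * b ^ 3 * c ^ 2 - 20 * b ^ 3 * c ^ 3 + 2 * b ^ 4 - 10 * b ^ 4 * c + 2 * b ^ 4 * c ^ 2 + 32 * b ^ 4 * c ^ 3 - 4 * b ^ 5 + 18 * b ^ 5 * c - 24 * b ^ 5 * c ^ 3 + 4 * b ^ 6 - 31 * b ^ 6 * c - 4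 * b ^ 7 + 30 * b ^ 7 * c - 10 * b ^ 7 * c ^ 2 + 16 * b ^ 7 * c ^ 3 - 8 * b ^ 8 * c + 26 * b ^ 8 * c ^ 2 - 48 * b ^ 8 * c ^ 3 + 4 * b ^ 9 - 16 * b ^ 9 * c - 41 * b ^ 9 * c ^ 2 + 44 * b ^ 9 * c ^ 3 - 12 * b ^ 10 + 46 * b ^ 10 * c + 62 * b ^ 10 * c ^ 2 - 12 * b ^ 10 * c ^ 3 + 20 * b ^ 11 - 80 * b ^ 11 * c - 44 * b ^ 11 * c ^ 2 + 4 * b ^ 11 * c ^ 3 - 31 * b ^ 12 + 60 * b ^ 12 * c - 4 * b ^ 12 * c ^ 2 + 16 * b ^ 12 * c ^ 3 + 30 * b ^ 13 - 12 * b ^ 13 * c + 42 * b ^ 13 * c ^ 2 - 16 * b ^ 13 * c ^ 3 - 12 * b ^ 14 - 12 * b ^ 14 * c - 96 * b ^ 14 * c ^ 2 - 4 * b ^ 15 + 64 * b ^ 15 * c + 76 * b ^ 15 * c ^ 2 + 26 * b ^ 16 - 60 * b ^ 16 * c - 12 * b ^ 16 * c ^ 2 - 48 * b ^ 17 + 12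 * b ^ 17 * c - 12 * b ^ 17 * c ^ 2 + 32 * b ^ 18 - 4 * b ^ 18 * c + 64 * b ^ 18 * c ^ 2 - 16 * b ^ 19 * c - 60 * b ^ 19 * c ^ 2 - 16 * b ^ 20 + 16 * b ^ 20 * c + 12 * b ^ 20 * c ^ 2 + 48 * b ^ 21 - 4 * b ^ 21 * c ^ 2 - 44 * b ^ 22 - 16 * b ^ 22 * c ^ 2 + 12 * b ^ 23 + 16 * b ^ 23 * c ^ 2 - 4 * b ^ 24 - 16 * b ^ 25 + 16 * b ^ 26)) * hG1 + ((-2 - 3 * c ^ 3 + 2 * c ^ 4 + 2 * b - b * c ^ 2 + 4 * b * c ^ 3 - 2 * b * c ^ 4 - b * c ^ 5 - 4 * b * c ^ 6 - 2 * b ^ 2 - b ^ 2 * c + 2 * b ^ 2 * c ^ 2 - 4 * b ^ 2 * c ^ 3 + b ^ 2 * c ^ 4 + 2 * b ^ 2 * c ^ 5 + 12 * b ^ 2 * c ^ 6 + b ^ 3 + 2 * b ^ 3 * c - 2 * b ^ 3 * c ^ 2 + 3 * b ^ 3 * c ^ 3 + 2 * b ^ 3 * c ^ 4 - 2 * b ^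 3 * c ^ 5 - 20 * b ^ 3 * c ^ 6 + b ^ 4 - 2 * b ^ 4 * c + 2 * b ^ 4 * c ^ 2 + 2 * b ^ 4 * c ^ 3 - 10 * b ^ 4 * c ^ 4 + 2 * b ^ 4 * c ^ 5 + 32 * b ^ 4 * c ^ 6 - 2 * b ^ 5 + 2 * b ^ 5 * c - 4 * b ^ 5 * c ^ 3 + 18 * b ^ 5 * c ^ 4 - 24 * b ^ 5 * c ^ 6 + 4 * b ^ 6 - b ^ 6 * c + 4 * b ^ 6 * c ^ 3 - 31 * b ^ 6 * c ^ 4 - 4 * b ^ 7 - 3 * b ^ 7 * c - 8 * b ^ 7 * c ^ 2 - 4 * b ^ 7 * c ^ 3 + 30 * b ^ 7 * c ^ 4 - 10 * b ^ 7 * c ^ 5 + 16 * b ^ 7 * c ^ 6 + 2 * b ^ 8 * c + 24 * b ^ 8 * c ^ 2 - b ^ 8 * c ^ 3 - 12 * b ^ 8 * c ^ 4 + 26 * b ^ 8 * c ^ 5 - 48 * b ^ 8 * c ^ 6 + 4 * b ^ 9 + 6 * b ^ 9 * c - 40 * b ^ 9 * c ^ 2 + 2 * b ^ 9 * c ^ 3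 - 4 * b ^ 9 * c ^ 4 - 41 * b ^ 9 * c ^ 5 + 44 * b ^ 9 * c ^ 6 - 12 * b ^ 10 - 14 * b ^ 10 * c + 64 * b ^ 10 * c ^ 2 - 2 * b ^ 10 * c ^ 3 + 26 * b ^ 10 * c ^ 4 + 62 * b ^ 10 * c ^ 5 - 12 * b ^ 10 * c ^ 6 + 20 * b ^ 11 + 32 * b ^ 11 * c - 52 * b ^ 11 * c ^ 2 + 2 * b ^ 11 * c ^ 3 - 48 * b ^ 11 * c ^ 4 - 44 * b ^ 11 * c ^ 5 + 4 * b ^ 11 * c ^ 6 - 31 * b ^ 12 - 32 * b ^ 12 * c + 12 * b ^ 12 * c ^ 2 + 32 * b ^ 12 * c ^ 4 - 4 * b ^ 12 * c ^ 5 + 16 * b ^ 12 * c ^ 6 + 30 * b ^ 13 + 4 * b ^ 13 * c + 12 * b ^ 13 * c ^ 2 + 42 * b ^ 13 * c ^ 5 - 16 * b ^ 13 * c ^ 6 - 12 * b ^ 14 + 28 * b ^ 14 * c - 64 * b ^ 14 * c ^ 2 - 16 * b ^ 14 * c ^ 4 - 96 * b ^ 14 * c ^ 5 - 4 * b ^ 15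 - 67 * b ^ 15 * c + 60 * b ^ 15 * c ^ 2 + 48 * b ^ 15 * c ^ 4 + 76 * b ^ 15 * c ^ 5 + 26 * b ^ 16 + 110 * b ^ 16 * c - 12 * b ^ 16 * c ^ 2 - 44 * b ^ 16 * c ^ 4 - 12 * b ^ 16 * c ^ 5 - 48 * b ^ 17 - 76 * b ^ 17 * c + 4 * b ^ 17 * c ^ 2 + 12 * b ^ 17 * c ^ 4 - 12 * b ^ 17 * c ^ 5 + 32 * b ^ 18 - 4 * b ^ 18 * c + 16 * b ^ 18 * c ^ 2 - 4 * b ^ 18 * c ^ 4 + 64 * b ^ 18 * c ^ 5 + 58 * b ^ 19 * c - 16 * b ^ 19 * c ^ 2 - 16 * b ^ 19 * c ^ 4 - 60 * b ^ 19 * c ^ 5 - 16 * b ^ 20 - 144 * b ^ 20 * c + 16 * b ^ 20 * c ^ 4 + 12 * b ^ 20 * c ^ 5 + 48 * b ^ 21 + 120 * b ^ 21 * c - 4 * b ^ 21 * c ^ 5 - 44 * b ^ 22 - 24 * b ^ 22 * c - 16 * b ^ 22 * c ^ 5 + 12 * b ^ 23 - 8 * b ^ 23 * c + 16 * b ^ 23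 * c ^ 5 - 4 * b ^ 24 + 80 * b ^ 24 * c - 16 * b ^ 25 - 76 * b ^ 25 * c + 16 * b ^ 26 + 12 * b ^ 26 * c - 4 * b ^ 27 * c - 16 * b ^ 28 * c + 16 * b ^ 29 * c)) * hG2 + ((-2 - 3 * c ^ 2 + 2 * c ^ 3 + 2 * b + 8 * b * c ^ 2 - 2 * b * c ^ 3 - b * c ^ 4 - 4 * b * c ^ 5 - 2 * b ^ 2 - 16 * b ^ 2 * c ^ 2 + b ^ 2 * c ^ 3 + 2 * b ^ 2 * c ^ 4 + 12 * b ^ 2 * c ^ 5 + 3 * b ^ 3 - 2 * b ^ 3 * c + 23 * b ^ 3 * c ^ 2 + 2 * b ^ 3 * c ^ 3 - 2 * b ^ 3 * c ^ 4 - 20 * b ^ 3 * c ^ 5 + 4 * b ^ 4 + 2 * b ^ 4 * c - 29 * b ^ 4 * c ^ 2 - 6 * b ^ 4 * c ^ 3 + 2 * b ^ 4 * c ^ 4 + 32 * b ^ 4 * c ^ 5 - 12 * b ^ 5 - b ^ 5 * c + 18 * b ^ 5 * c ^ 2 + 6 * b ^ 5 * c ^ 3 - 24 * b ^ 5 * c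 ^ 5 + 27 * b ^ 6 - 2 * b ^ 6 * c + 6 * b ^ 6 * c ^ 2 - 11 * b ^ 6 * c ^ 3 - 35 * b ^ 7 + 12 * b ^ 7 * c - 22 * b ^ 7 * c ^ 2 - 2 * b ^ 7 * c ^ 3 - 10 * b ^ 7 * c ^ 4 + 16 * b ^ 7 * c ^ 5 + 14 * b ^ 8 - 20 * b ^ 8 * c + 47 * b ^ 8 * c ^ 2 + 12 * b ^ 8 * c ^ 3 + 26 * b ^ 8 * c ^ 4 - 48 * b ^ 8 * c ^ 5 + 18 * b ^ 9 + 32 * b ^ 9 * c - 42 * b ^ 9 * c ^ 2 - 4 * b ^ 9 * c ^ 3 - 41 * b ^ 9 * c ^ 4 + 44 * b ^ 9 * c ^ 5 - 56 * b ^ 10 - 28 * b ^ 10 * c + 20 * b ^ 10 * c ^ 2 + 10 * b ^ 10 * c ^ 3 + 62 * b ^ 10 * c ^ 4 - 12 * b ^ 10 * c ^ 5 + 112 * b ^ 11 - 28 * b ^ 11 * c ^ 2 - 44 * b ^ 11 * c ^ 4 + 4 * b ^ 11 * c ^ 5 - 96 * b ^ 12 + 32 * b ^ 12 * c + 25 *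 b ^ 12 * c ^ 2 - 12 * b ^ 12 * c ^ 3 - 4 * b ^ 12 * c ^ 4 + 16 * b ^ 12 * c ^ 5 + 28 * b ^ 13 - 76 * b ^ 13 * c - 46 * b ^ 13 * c ^ 2 + 12 * b ^ 13 * c ^ 3 + 42 * b ^ 13 * c ^ 4 - 16 * b ^ 13 * c ^ 5 + 20 * b ^ 14 + 112 * b ^ 14 * c + 44 * b ^ 14 * c ^ 2 - 20 * b ^ 14 * c ^ 3 - 96 * b ^ 14 * c ^ 4 - 100 * b ^ 15 - 76 * b ^ 15 * c + 4 * b ^ 15 * c ^ 2 + 32 * b ^ 15 * c ^ 3 + 76 * b ^ 15 * c ^ 4 + 140 * b ^ 16 + 12 * b ^ 16 * c - 42 * b ^ 16 * c ^ 2 - 28 * b ^ 16 * c ^ 3 - 12 * b ^ 16 * c ^ 4 - 76 * b ^ 17 + 28 * b ^ 17 * c + 96 * b ^ 17 * c ^ 2 + 12 * b ^ 17 * c ^ 3 - 12 * b ^ 17 * c ^ 4 + 4 * b ^ 18 - 112 * b ^ 18 * c - 76 * b ^ 18 * c ^ 2 - 4 * b ^ 18 * c ^ 3 + 64 * b ^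 18 * c ^ 4 + 48 * b ^ 19 + 104 * b ^ 19 * c + 12 * b ^ 19 * c ^ 2 - 16 * b ^ 19 * c ^ 3 - 60 * b ^ 19 * c ^ 4 - 112 * b ^ 20 - 24 * b ^ 20 * c + 12 * b ^ 20 * c ^ 2 + 16 * b ^ 20 * c ^ 3 + 12 * b ^ 20 * c ^ 4 + 88 * b ^ 21 + 8 * b ^ 21 * c - 64 * b ^ 21 * c ^ 2 - 4 * b ^ 21 * c ^ 4 - 24 * b ^ 22 + 32 * b ^ 22 * c + 60 * b ^ 22 * c ^ 2 - 16 * b ^ 22 * c ^ 4 + 8 * b ^ 23 - 32 * b ^ 23 * c - 12 * b ^ 23 * c ^ 2 + 16 * b ^ 23 * c ^ 4 + 32 * b ^ 24 + 4 * b ^ 24 * c ^ 2 - 32 * b ^ 25 + 16 * b ^ 25 * c ^ 2 - 16 * b ^ 26 * c ^ 2)) * hG3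
  · rintro ⟨hP, rfl⟩
    unfold nodeY
    refine ⟨?_, ?_, ?_⟩
    · linear_combination ((2 - 2 * b + 2 * b ^ 2 + 13 * b ^ 3 - 55 * b ^ 4 + 148 * b ^ 5 - 287 * b ^ 6 + 439 * b ^ 7 - 418 * b ^ 8 - 12 * b ^ 9 + 1084 * b ^ 10 - 2776 * b ^ 11 + 4511 * b ^ 12 - 4989 * b ^ 13 + 2590 * b ^ 14 + 3832 * b ^ 15 - 13554 * b ^ 16 + 22777 * b ^ 17 - 25320 * b ^ 18 + 15018 * b ^ 19 + 10260 * b ^ 20 - 44216 * b ^ 21 + 71915 * b ^ 22 - 74936 * b ^ 23 + 40376 * b ^ 24 + 27776 * b ^ 25 - 104643 * b ^ 26 + 152724 * b ^ 27 - 138704 * b ^ 28 + 54703 * b ^ 29 + 69972 * b ^ 30 - 179832 * b ^ 31 + 218279 * b ^ 32 - 158338 * b ^ 33 + 23734 * b ^ 34 + 123424 * b ^ 35 - 213168 * b ^ 36 + 202570 * b ^ 37 - 102992 * b ^ 38 - 31816 * b ^ 39 + 136416 * b ^ 40 - 164580 * b ^ 41 + 116537 * b ^ 42 - 28584 * b ^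 43 - 52176 * b ^ 44 + 89176 * b ^ 45 - 77796 * b ^ 46 + 37232 * b ^ 47 + 6456 * b ^ 48 - 31552 * b ^ 49 + 33908 * b ^ 50 - 21440 * b ^ 51 + 4992 * b ^ 52 + 5792 * b ^ 53 - 8912 * b ^ 54 + 6848 * b ^ 55 - 2848 * b ^ 56 + 1152 * b ^ 58 - 1152 * b ^ 59 + 640 * b ^ 60 - 256 * b ^ 61 + 64 * b ^ 62)) * hP
    · linear_combination (-3 + 4 * b - 4 * b ^ 2 - 3 * b ^ 3 + 18 * b ^ 4 - 42 * b ^ 5 + 69 * b ^ 6 - 89 * b ^ 7 + 55 * b ^ 8 + 55 * b ^ 9 - 241 * b ^ 10 + 451 * b ^ 11 - 558 * b ^ 12 + 426 * b ^ 13 + 8 * b ^ 14 - 687 * b ^ 15 + 1345 * b ^ 16 - 1577 * b ^ 17 + 1124 * b ^ 18 + 10 * b ^ 19 - 1425 * b ^ 20 + 2391 * b ^ 21 - 2386 * b ^ 22 + 1326 * b ^ 23 + 396 * b ^ 24 - 1853 * b ^ 25 + 2388 * b ^ 26 - 1844 * b ^ 27 + 500 * b ^ 28 + 795 * b ^ 29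 - 1474 * b ^ 30 + 1402 * b ^ 31 - 714 * b ^ 32 - 26 * b ^ 33 + 476 * b ^ 34 - 576 * b ^ 35 + 356 * b ^ 36 - 96 * b ^ 37 - 72 * b ^ 38 + 136 * b ^ 39 - 96 * b ^ 40 + 48 * b ^ 41 - 16 * b ^ 42) * hP
    · linear_combination ((4 * b - 8 * b ^ 2 + 12 * b ^ 3 - 44 * b ^ 5 + 149 * b ^ 6 - 307 * b ^ 7 + 478 * b ^ 8 - 468 * b ^ 9 + 21 * b ^ 10 + 1084 * b ^ 11 - 2812 * b ^ 12 + 4573 * b ^ 13 - 5042 * b ^ 14 + 2614 * b ^ 15 + 3840 * b ^ 16 - 13590 * b ^ 17 + 22812 * b ^ 18 - 25340 * b ^ 19 + 15022 * b ^ 20 + 10272 * b ^ 21 - 44228 * b ^ 22 + 71923 * b ^ 23 - 74940 * b ^ 24 + 40376 * b ^ 25 + 27776 * b ^ 26 - 104643 * b ^ 27 + 152724 * b ^ 28 - 138704 * b ^ 29 + 54703 * b ^ 30 + 69972 * b ^ 31 - 179832 * b ^ 32 + 218279 * b ^ 33 - 158338 * b ^ 34 + 23734 * b ^ 35 + 123424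 * b ^ 36 - 213168 * b ^ 37 + 202570 * b ^ 38 - 102992 * b ^ 39 - 31816 * b ^ 40 + 136416 * b ^ 41 - 164580 * b ^ 42 + 116537 * b ^ 43 - 28584 * b ^ 44 - 52176 * b ^ 45 + 89176 * b ^ 46 - 77796 * b ^ 47 + 37232 * b ^ 48 + 6456 * b ^ 49 - 31552 * b ^ 50 + 33908 * b ^ 51 - 21440 * b ^ 52 + 4992 * b ^ 53 + 5792 * b ^ 54 - 8912 * b ^ 55 + 6848 * b ^ 56 - 2848 * b ^ 57 + 1152 * b ^ 59 - 1152 * b ^ 60 + 640 * b ^ 61 - 256 * b ^ 62 + 64 * b ^ 63)) * hP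

/-- The common zero locus in `ℂ⁵ ∖ {0}` of the nine polynomials is the union of
exactly 22 orbits of the weighted `ℂ*`-action with weights `(1,3,4,5,6)`:
it is invariant under the action, and the quotient of it by the orbit relation
has exactly 22 elements; equivalently, it determines exactly 22 points of the
weighted projective space `ℙ(1,3,4,5,6)`. -/
theorem singular_locus_is_22_points :
    (∀ p ∈ singLocus, ∀ l : ℂ, l ≠ 0 → wAct l p ∈ singLocus) ∧
    Nat.card (Quot fun p q : singLocus =>
      ∃ l : ℂ, l ≠ 0 ∧ (q : Fin 5 → ℂ) = wAct l (p : Fin 5 → ℂ)) = 22 := by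
  refine ⟨fun p hp l hl => wAct_mem_singLocus hl hp, ?_⟩
  have mem_iff (b c : ℂ) : divisorD 1 b c ∈ singLocus ↔ nodePoly.IsRoot b ∧ c = nodeY b :=
    (divisorD_one_mem_singLocus_iff b c).trans (divisorEqns_one_eq_zero_iff b c)
  let node (b : nodePoly.rootSet ℂ) : singLocus :=
    ⟨divisorD 1 b (nodeY b), (mem_iff _ _).mpr ⟨mem_rootSet_nodePoly.mp b.2, rfl⟩⟩
  rw [card_quot_eq_of_transversal (equivalence_wAct.comap Subtype.val) node, card_rootSet_nodePoly]
  · rintro ⟨p, hp⟩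
    obtain ⟨l, hl, b, c, hmem, rfl⟩ := exists_eq_wAct_divisorD_one hp
    obtain ⟨hb, rfl⟩ := (mem_iff b c).mp hmem
    exact ⟨⟨b, mem_rootSet_nodePoly.mpr hb⟩, l, hl, rfl⟩
  · intro i j ⟨l, _, h⟩
    exact Subtype.ext (eq_of_divisorD_one_eq_wAct h)
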